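/- Fix a real number n and for real numbers a, b, c, d define the 3×3 real matrix R(a,b,c,d) with rows (a², c²n, 2acn), (b²n, d², 2bdn), (ab, cd, bcn + ad), and let Q = ![![0,1,0],![1,0,0],![0,0,-2n]]. Then: (1) for all a₁,b₁,c₁,d₁,a₂,b₂,c₂,d₂ one has R(a₁,b₁,c₁,d₁)·R(a₂,b₂,c₂,d₂) = R(a₂a₁ + b₂c₁n, a₂b₁ + b₂d₁, c₂a₁ + d₂c₁, c₂b₁n + d₂d₁) (i.e. R reverses the composition inherited from multiplying the 2×2 matrices (aᵢ, bᵢ; cᵢn, dᵢ)); and (2) if a·d − n·b·c = 1 then R(a,b,c,d)ᵀ · Q · R(a,b,c,d) = Q and det R(a,b,c,d) = 1. -/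
import Mathlib


open Matrix

namespace Stmt8

/-- The matrix `R(a,b,c,d)` with rows `(a², c²n, 2acn)`, `(b²n, d², 2bdn)`,
`(ab, cd, bcn + ad)`. -/
def R (n a b c d : ℝ) : Matrix (Fin 3) (Fin 3) ℝ :=
  !![a ^ 2, c ^ 2 * n, 2 * a * c * n;
     b ^ 2 * n, d ^ 2, 2 * b * d * n;
     a * b, c * d, b * c * n + a * d]

/-- The Gram matrix `Q` of the signature `(2,1)` form. -/
def Q (n : ℝ) : Matrix (Fin 3) (Fin 3) ℝ := !![0, 1, 0; 1, 0, 0; 0, 0, -2 * n]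

theorem statement8 (n : ℝ) :
    -- (1) `R` reverses the composition inherited from multiplying the
    -- 2×2 matrices `(aᵢ, bᵢ; cᵢn, dᵢ)`
    (∀ a₁ b₁ c₁ d₁ a₂ b₂ c₂ d₂ : ℝ,
        R n a₁ b₁ c₁ d₁ * R n a₂ b₂ c₂ d₂ =
          R n (a₂ * a₁ + b₂ * c₁ * n) (a₂ * b₁ + b₂ * d₁)
            (c₂ * a₁ + d₂ * c₁) (c₂ * b₁ * n + d₂ * d₁)) ∧
    -- (2) determinant-one matrices land in the special orthogonal group of `Q`
    (∀ a b c d : ℝ, a * d - n * b * c = 1 →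
        (R n a b c d)ᵀ * Q n * R n a b c d = Q n ∧ (R n a b c d).det = 1) := by
  constructor
  · intro a₁ b₁ c₁ d₁ a₂ b₂ c₂ d₂
    simp only [R]
    ext i j
    fin_cases i <;> fin_cases j <;>
      simp [Matrix.mul_apply, Fin.sum_univ_succ] <;> ring
  · intro a b c d h
    constructor
    · simp only [R, Q]
      ext i j
      fin_cases i <;> fin_cases j <;>
        simp [Matrix.mul_apply, Fin.sum_univ_succ, Matrix.vecHead, Matrix.vecTail] <;>
        first
        | ring1
        | linear_combination (a * d - n * b * c + 1) * h
        | linear_combination (-2 * n * (a * d - n * b * c + 1)) * h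
    · rw [Matrix.det_fin_three]
      simp [R]
      linear_combination ((a * d - n * b * c) ^ 2 + (a * d - n * b * c) + 1) * h

end Stmt8
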